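/- Conversely, if the completely positive self-adjoint map F_γ ∘ G_γ : M_k → M_k leaves WM_kW invariant for an orthogonal projection W (i.e., Im(F_γ(G_γ(W))) ⊆ Im(W)), then taking V to be the orthogonal projection onto Im(G_γ(W)), one has tr(γ(W ⊗ V^⊥)) = tr(γ(W^⊥ ⊗ V)) = 0. -/

import Mathlib

open Matrix ComplexOrder Kronecker

noncomputable def Gmap {k m : ℕ} (γ : Matrix (Fin k × Fin m) (Fin k × Fin m) ℂ)
    (X : Matrix (Fin k) (Fin k) ℂ) : Matrix (Fin m) (Fin m) ℂ :=
  Matrix.of fun p q => ∑ i, ∑ j, γ (i, p) (j, q) * X j i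

noncomputable def Fmap {k m : ℕ} (γ : Matrix (Fin k × Fin m) (Fin k × Fin m) ℂ)
    (Y : Matrix (Fin m) (Fin m) ℂ) : Matrix (Fin k) (Fin k) ℂ :=
  Matrix.of fun i j => ∑ p, ∑ q, γ (i, p) (j, q) * Y q p

/-!
Write `G = G_γ(W)`. Since `V` restricts to the identity on `Im G`, we have `V * G = G`, hence
`tr(γ(W ⊗ V^⊥)) = tr(G V^⊥) = tr G - tr(V G) = 0`. Invariance gives `W * F_γ(G) = F_γ(G)`, hence
`tr(γ(W^⊥ ⊗ G)) = tr(F_γ(G) W^⊥) = 0`. Both `γ` and `W^⊥ ⊗ G` are positive semidefinite, and a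
product of two positive semidefinite matrices with zero trace vanishes, so `γ (W^⊥ ⊗ G) = 0`.
Finally `Im V = Im G` lets `W^⊥ ⊗ V` factor as `(W^⊥ ⊗ G)(1 ⊗ M)`.
-/

namespace Matrix

section PosSemidef

open scoped MatrixOrder

variable {l n p 𝕜 : Type*} [Fintype n] [RCLike 𝕜]

lemma trace_conjTranspose_mul_self_mul_conjTranspose_mul_self [Fintype l] [Fintype p]
    (a : Matrix l n 𝕜) (b : Matrix p n 𝕜) :
    (aᴴ * a * (bᴴ * b)).trace = ((a * bᴴ)ᴴ * (a * bᴴ)).trace := by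
  rw [conjTranspose_mul, conjTranspose_conjTranspose, Matrix.mul_assoc b, trace_mul_comm b]
  simp only [Matrix.mul_assoc]

lemma PosSemidef.trace_mul_nonneg {A B : Matrix n n 𝕜} (hA : A.PosSemidef) (hB : B.PosSemidef) :
    0 ≤ (A * B).trace := by
  classical
  obtain ⟨a, rfl⟩ := CStarAlgebra.nonneg_iff_eq_star_mul_self.mp hA.nonneg
  obtain ⟨b, rfl⟩ := CStarAlgebra.nonneg_iff_eq_star_mul_self.mp hB.nonneg
  rw [star_eq_conjTranspose, star_eq_conjTranspose,
    trace_conjTranspose_mul_self_mul_conjTranspose_mul_self]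
  exact (posSemidef_conjTranspose_mul_self _).trace_nonneg

lemma PosSemidef.trace_mul_eq_zero_iff {A B : Matrix n n 𝕜} (hA : A.PosSemidef)
    (hB : B.PosSemidef) : (A * B).trace = 0 ↔ A * B = 0 := by
  classical
  refine ⟨fun h => ?_, fun h => by rw [h, trace_zero]⟩
  obtain ⟨a, rfl⟩ := CStarAlgebra.nonneg_iff_eq_star_mul_self.mp hA.nonneg
  obtain ⟨b, rfl⟩ := CStarAlgebra.nonneg_iff_eq_star_mul_self.mp hB.nonneg
  rw [star_eq_conjTranspose, star_eq_conjTranspose,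
    trace_conjTranspose_mul_self_mul_conjTranspose_mul_self,
    trace_conjTranspose_mul_self_eq_zero_iff] at h
  rw [star_eq_conjTranspose, star_eq_conjTranspose, Matrix.mul_assoc, ← Matrix.mul_assoc a, h,
    Matrix.zero_mul, Matrix.mul_zero]

lemma _root_.IsStarProjection.posSemidef {P : Matrix n n 𝕜} (hP : IsStarProjection P) :
    P.PosSemidef :=
  hP.nonneg.posSemidef

end PosSemidef

section Range

variable {n R : Type*} [Fintype n] [DecidableEq n] [CommRing R]

lemma exists_eq_mul_of_range_le {A B : Matrix n n R}
    (h : LinearMap.range A.mulVecLin ≤ LinearMap.range B.mulVecLin) :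
    ∃ M : Matrix n n R, A = B * M := by
  choose c hc using fun j => h ⟨Pi.single j 1, rfl⟩
  refine ⟨(of c)ᵀ, ext_of_mulVec_single fun j => ?_⟩
  simp only [mulVecLin_apply] at hc
  rw [← hc j, ← mulVec_mulVec]
  simp

lemma mul_eq_self_of_range_le {P A : Matrix n n R} (hP : IsIdempotentElem P)
    (h : LinearMap.range A.mulVecLin ≤ LinearMap.range P.mulVecLin) : P * A = A := by
  obtain ⟨M, rfl⟩ := exists_eq_mul_of_range_le h
  rw [← Matrix.mul_assoc, hP.eq]

end Range

end Matrix

section GmapFmap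

variable {k m : ℕ}

theorem trace_mul_kronecker_eq_trace_Gmap_mul (γ : Matrix (Fin k × Fin m) (Fin k × Fin m) ℂ)
    (X : Matrix (Fin k) (Fin k) ℂ) (Y : Matrix (Fin m) (Fin m) ℂ) :
    (γ * (X ⊗ₖ Y)).trace = (Gmap γ X * Y).trace := by
  simp only [trace, diag_apply, mul_apply, Gmap, of_apply, kroneckerMap_apply,
    Fintype.sum_prod_type, Finset.sum_mul]
  rw [Finset.sum_comm]
  refine Finset.sum_congr rfl fun p _ => Finset.sum_comm_cycle.trans ?_
  simp only [mul_assoc]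

theorem trace_mul_kronecker_eq_trace_Fmap_mul (γ : Matrix (Fin k × Fin m) (Fin k × Fin m) ℂ)
    (X : Matrix (Fin k) (Fin k) ℂ) (Y : Matrix (Fin m) (Fin m) ℂ) :
    (γ * (X ⊗ₖ Y)).trace = (Fmap γ Y * X).trace := by
  simp only [trace, diag_apply, mul_apply, Fmap, of_apply, kroneckerMap_apply,
    Fintype.sum_prod_type, Finset.sum_mul]
  refine Finset.sum_congr rfl fun i _ => Finset.sum_comm.trans ?_
  simp only [mul_assoc, mul_comm (X _ _)]

theorem Gmap_isHermitian {γ : Matrix (Fin k × Fin m) (Fin k × Fin m) ℂ}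
    {X : Matrix (Fin k) (Fin k) ℂ} (hγ : γ.IsHermitian) (hX : X.IsHermitian) :
    (Gmap γ X).IsHermitian := by
  ext p q
  simp only [conjTranspose_apply, Gmap, of_apply, star_sum, star_mul']
  rw [Finset.sum_comm]
  refine Finset.sum_congr rfl fun i _ => Finset.sum_congr rfl fun j _ => ?_
  rw [hγ.apply, hX.apply]

theorem Gmap_posSemidef {γ : Matrix (Fin k × Fin m) (Fin k × Fin m) ℂ}
    {X : Matrix (Fin k) (Fin k) ℂ} (hγ : γ.PosSemidef) (hX : X.PosSemidef) :
    (Gmap γ X).PosSemidef := by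
  refine .of_dotProduct_mulVec_nonneg (Gmap_isHermitian hγ.1 hX.1) fun y => ?_
  rw [dotProduct_comm, ← trace_vecMulVec, ← mul_vecMulVec,
    ← trace_mul_kronecker_eq_trace_Gmap_mul]
  exact hγ.trace_mul_nonneg (hX.kronecker (posSemidef_vecMulVec_self_star y))

end GmapFmap

theorem stmt8_general (k m : ℕ) (γ : Matrix (Fin k × Fin m) (Fin k × Fin m) ℂ)
    (W : Matrix (Fin k) (Fin k) ℂ) (V : Matrix (Fin m) (Fin m) ℂ)
    (hγ : γ.PosSemidef)
    (hWherm : W.IsHermitian) (hWproj : W * W = W)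
    (hinv : LinearMap.range (Fmap γ (Gmap γ W)).mulVecLin ≤ LinearMap.range W.mulVecLin)
    (hVproj : V * V = V)
    (hVrange : LinearMap.range V.mulVecLin = LinearMap.range (Gmap γ W).mulVecLin) :
    (γ * (W ⊗ₖ (1 - V))).trace = 0 ∧ (γ * ((1 - W) ⊗ₖ V)).trace = 0 := by
  set G := Gmap γ W
  have hW : IsStarProjection W := ⟨hWproj, hWherm⟩
  have hVG : V * G = G := mul_eq_self_of_range_le hVproj hVrange.ge
  have hWF : W * Fmap γ G = Fmap γ G := mul_eq_self_of_range_le hWproj hinv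
  refine ⟨?_, ?_⟩
  · rw [trace_mul_kronecker_eq_trace_Gmap_mul, Matrix.mul_sub, Matrix.mul_one, trace_sub,
      trace_mul_comm, hVG, sub_self]
  · have htrace : (γ * ((1 - W) ⊗ₖ G)).trace = 0 := by
      rw [trace_mul_kronecker_eq_trace_Fmap_mul, Matrix.mul_sub, Matrix.mul_one, trace_sub,
        trace_mul_comm, hWF, sub_self]
    have hzero : γ * ((1 - W) ⊗ₖ G) = 0 :=
      (hγ.trace_mul_eq_zero_iff
        (hW.one_sub.posSemidef.kronecker (Gmap_posSemidef hγ hW.posSemidef))).mp htrace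
    obtain ⟨M, hM⟩ := exists_eq_mul_of_range_le hVrange.le
    rw [hM, ← Matrix.mul_one (1 - W), mul_kronecker_mul, ← Matrix.mul_assoc, hzero,
      Matrix.zero_mul, trace_zero]

/-- If `F_γ ∘ G_γ` leaves `W M_k W` invariant, i.e.
`Im(F_γ(G_γ(W))) ⊆ Im(W)`, and `V` is the orthogonal projection onto `Im(G_γ(W))`, then
`tr(γ(W ⊗ V^⊥)) = tr(γ(W^⊥ ⊗ V)) = 0`. -/
theorem stmt8 (k m : ℕ) (γ : Matrix (Fin k × Fin m) (Fin k × Fin m) ℂ)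
    (W : Matrix (Fin k) (Fin k) ℂ) (V : Matrix (Fin m) (Fin m) ℂ)
    (hγ : γ.PosSemidef)
    (hWherm : W.IsHermitian) (hWproj : W * W = W)
    (hinv : LinearMap.range (Fmap γ (Gmap γ W)).mulVecLin ≤ LinearMap.range W.mulVecLin)
    (hVherm : V.IsHermitian) (hVproj : V * V = V)
    (hVrange : LinearMap.range V.mulVecLin = LinearMap.range (Gmap γ W).mulVecLin) :
    (γ * (W ⊗ₖ (1 - V))).trace = 0 ∧ (γ * ((1 - W) ⊗ₖ V)).trace = 0 :=
  stmt8_general k m γ W V hγ hWherm hWproj hinv hVproj hVrange
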